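/- Let A be the 2×2 coloring matrix with rows (1,1) and (1,0). The number of A-colored plane trees on n ≥ 1 vertices whose root has color 1 is (1/n)·binom(3n-2, n-1), and the number with root color 2 is (1/(2n-1))·binom(3n-3, n-1). -/

import Mathlib

/-! A tree with root colour 1 is a root above a forest of arbitrary valid trees, and a tree with
root colour 2 is a root above a forest of trees with root colour 1 (colours 1 and 2 are `0` and
`1 : Fin 2`). So the generating functions `A`, `B` by root colour satisfy `A = X / (1 - A - B)` and
`B = X / (1 - A)`, whence `B = A - A²` and `A (1 - A)² = X`. Differentiating this cubic twice and
eliminating gives the linear ODE `X (4 - 27 X) A'' + (2 - 27 X) A' + 3 A = 2`, which is the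
hypergeometric recurrence of `binom(3n - 2, n - 1) / n`; likewise `3 X B' = 2 B + X A'` gives
`(3n - 2) bₙ = n aₙ`. -/

inductive CTree (α : Type) : Type
  | node : α → List (CTree α) → CTree α

namespace CTree

def color {α : Type} : CTree α → α
  | node c _ => c

def children {α : Type} : CTree α → List (CTree α)
  | node _ ts => ts

def size {α : Type} : CTree α → ℕ
  | node _ ts => 1 + (ts.attach.map fun t => size t.1).sum
decreasing_by
  have := List.sizeOf_lt_of_mem t.2
  simp only [CTree.node.sizeOf_spec]
  omega

def Valid {α : Type} (A : Matrix α α ℕ) : CTree α → Prop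
  | node c ts => ∀ t ∈ ts, A c t.color = 1 ∧ Valid A t

end CTree

/-- Number of `A`-colored plane trees with `n` vertices and root color `i`. -/
noncomputable def colorCount {m : ℕ} (A : Matrix (Fin m) (Fin m) ℕ) (i : Fin m) (n : ℕ) : ℕ :=
  {t : CTree (Fin m) | t.Valid A ∧ t.size = n ∧ t.color = i}.ncard

/-- Total number of `A`-colored plane trees with `n` vertices. -/
noncomputable def totalCount {α : Type} (A : Matrix α α ℕ) (n : ℕ) : ℕ :=
  {t : CTree α | t.Valid A ∧ t.size = n}.ncard

open PowerSeries Finset.HasAntidiagonal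

theorem List.finite_setOf_forall_mem_length_le {β : Type*} {s : Set β} (hs : s.Finite) (n : ℕ) :
    {l : List β | (∀ x ∈ l, x ∈ s) ∧ l.length ≤ n}.Finite := by
  have : Finite s := hs.to_subtype
  refine ((List.finite_length_le s n).image (List.map Subtype.val)).subset ?_
  rintro l ⟨hl, hlen⟩
  exact ⟨l.attach.map fun x => ⟨x.1, hl x.1 x.2⟩, by simpa using hlen, by simp⟩

namespace CTree

variable {α : Type}

theorem size_node (c : α) (ts : List (CTree α)) :
    (node c ts).size = 1 + (ts.map size).sum := by
  rw [size, List.map_attach_eq_pmap, List.pmap_eq_map]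

theorem one_le_size : ∀ t : CTree α, 1 ≤ t.size
  | node c ts => by rw [size_node]; omega

theorem size_le_sum_size {t : CTree α} {l : List (CTree α)} (ht : t ∈ l) :
    t.size ≤ (l.map size).sum :=
  List.le_sum_of_mem (List.mem_map_of_mem ht)

theorem length_le_sum_size (l : List (CTree α)) : l.length ≤ (l.map size).sum := by
  simpa using List.length_le_sum_of_one_le (l.map size) (by simp [one_le_size])

theorem valid_node_iff {A : Matrix α α ℕ} (c : α) (ts : List (CTree α)) :
    (node c ts).Valid A ↔ ∀ t ∈ ts, t ∈ {t : CTree α | t.Valid A ∧ A c t.color = 1} := by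
  simp only [Valid, Set.mem_ofPred_eq, and_comm]

theorem finite_setOf_sum_size_le {n : ℕ} (h : {t : CTree α | t.size ≤ n}.Finite) :
    {l : List (CTree α) | (l.map size).sum ≤ n}.Finite :=
  (List.finite_setOf_forall_mem_length_le h n).subset fun l hl =>
    ⟨fun _ ht => (size_le_sum_size ht).trans hl, (length_le_sum_size l).trans hl⟩

theorem finite_setOf_size_le [Finite α] : ∀ n : ℕ, {t : CTree α | t.size ≤ n}.Finite
  | 0 => Set.finite_empty.subset fun t ht => absurd (one_le_size t) (by simp_all)
  | n + 1 => by
    refine ((Set.finite_univ.prod (finite_setOf_sum_size_le (finite_setOf_size_le n))).image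
      fun p : α × List (CTree α) => node p.1 p.2).subset ?_
    rintro ⟨c, ts⟩ h
    simp only [Set.mem_ofPred_eq, size_node] at h
    exact ⟨(c, ts), ⟨trivial, by simp only [Set.mem_ofPred_eq]; omega⟩, rfl⟩

def ofSize (S : Set (CTree α)) (n : ℕ) : Set (CTree α) := {t | t ∈ S ∧ t.size = n}

def forestsOfSize (S : Set (CTree α)) (n : ℕ) : Set (List (CTree α)) :=
  {l | (∀ t ∈ l, t ∈ S) ∧ (l.map size).sum = n}

theorem ofSize_zero (S : Set (CTree α)) : ofSize S 0 = ∅ :=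
  Set.eq_empty_of_forall_notMem fun t ht => by have := one_le_size t; simp_all [ofSize]

theorem forestsOfSize_zero (S : Set (CTree α)) : forestsOfSize S 0 = {[]} := by
  ext (_ | ⟨t, l⟩)
  · simp [forestsOfSize]
  · have := one_le_size t
    simp only [forestsOfSize, Set.mem_ofPred_eq, List.map_cons, List.sum_cons,
      Set.mem_singleton_iff, reduceCtorEq, iff_false, not_and]
    omega

theorem forestsOfSize_succ (S : Set (CTree α)) (n : ℕ) :
    forestsOfSize S (n + 1) = ⋃ p ∈ antidiagonal (n + 1),
      (fun q : CTree α × List (CTree α) => q.1 :: q.2) ''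
        (ofSize S p.1 ×ˢ forestsOfSize S p.2) := by
  ext (_ | ⟨t, l⟩)
  · simp [forestsOfSize]
  · simp only [forestsOfSize, ofSize, Set.mem_iUnion, Set.mem_image, Set.mem_prod,
      Set.mem_ofPred_eq, mem_antidiagonal, List.cons.injEq, List.forall_mem_cons,
      List.map_cons, List.sum_cons, Prod.exists]
    constructor
    · rintro ⟨⟨ht, hl⟩, hsum⟩
      exact ⟨t.size, _, hsum, t, l, ⟨⟨ht, rfl⟩, hl, rfl⟩, rfl, rfl⟩
    · rintro ⟨i, j, hij, t, l, ⟨⟨ht, rfl⟩, hl, rfl⟩, rfl, rfl⟩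
      exact ⟨⟨ht, hl⟩, hij⟩

noncomputable def genFun (S : Set (CTree α)) : ℚ⟦X⟧ := mk fun n => ((ofSize S n).ncard : ℚ)

noncomputable def forestGenFun (S : Set (CTree α)) : ℚ⟦X⟧ :=
  mk fun n => ((forestsOfSize S n).ncard : ℚ)

section Finite

variable [Finite α]

theorem finite_ofSize (S : Set (CTree α)) (n : ℕ) : (ofSize S n).Finite :=
  (finite_setOf_size_le n).subset fun _ ht => ht.2.le

theorem finite_forestsOfSize (S : Set (CTree α)) (n : ℕ) : (forestsOfSize S n).Finite :=
  (finite_setOf_sum_size_le (finite_setOf_size_le n)).subset fun _ hl => hl.2.le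

theorem ncard_forestsOfSize_succ (S : Set (CTree α)) (n : ℕ) :
    (forestsOfSize S (n + 1)).ncard =
      ∑ p ∈ antidiagonal (n + 1), (ofSize S p.1).ncard * (forestsOfSize S p.2).ncard := by
  set cons := fun q : CTree α × List (CTree α) => q.1 :: q.2
  have hcons : cons.Injective := fun _ _ h => Prod.ext (List.cons.inj h).1 (List.cons.inj h).2
  have hdisj : (antidiagonal (n + 1) : Set (ℕ × ℕ)).PairwiseDisjoint fun p =>
      cons '' (ofSize S p.1 ×ˢ forestsOfSize S p.2) := by
    rintro p hp p' hp' hne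
    refine Set.disjoint_left.mpr ?_
    rintro _ ⟨⟨t, l⟩, ⟨⟨-, ht⟩, -⟩, rfl⟩ ⟨⟨t', l'⟩, ⟨⟨-, ht'⟩, -⟩, h⟩
    obtain ⟨rfl, -⟩ := List.cons.inj h
    simp only [Finset.mem_coe, mem_antidiagonal] at hp hp' ht ht'
    exact hne (Prod.ext (ht.symm.trans ht') (by omega))
  rw [forestsOfSize_succ, ← Finset.set_biUnion_coe,
    (antidiagonal (n + 1)).finite_toSet.ncard_biUnion
      (fun p _ => ((finite_ofSize S _).prod (finite_forestsOfSize S _)).image _) hdisj,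
    finsum_mem_coe_finset]
  simp only [Set.ncard_image_of_injective _ hcons, Set.ncard_prod]

theorem forestGenFun_eq (S : Set (CTree α)) :
    forestGenFun S = 1 + genFun S * forestGenFun S := by
  ext (_ | n)
  · simp [forestGenFun, genFun, forestsOfSize_zero, ofSize_zero]
  · simp only [forestGenFun, genFun, map_add, coeff_mul, coeff_mk, coeff_one,
      ncard_forestsOfSize_succ]
    simp

theorem genFun_biUnion {ι : Type*} (s : Finset ι) (S : ι → Set (CTree α))
    (hS : (s : Set ι).PairwiseDisjoint S) :
    genFun (⋃ i ∈ s, S i) = ∑ i ∈ s, genFun (S i) := by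
  ext n
  have hunion : ofSize (⋃ i ∈ s, S i) n = ⋃ i ∈ (s : Set ι), ofSize (S i) n := by
    ext t
    simp only [ofSize, Set.mem_ofPred_eq, Set.mem_iUnion, Finset.mem_coe, exists_prop]
    aesop
  have hdisj : (s : Set ι).PairwiseDisjoint fun i => ofSize (S i) n :=
    hS.mono fun _ _ ht => ht.1
  simp only [genFun, coeff_mk, map_sum, hunion,
    s.finite_toSet.ncard_biUnion (fun i _ => finite_ofSize (S i) n) hdisj, finsum_mem_coe_finset]
  push_cast
  rfl

end Finite

end CTree

section Coloring

open CTree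

variable {m : ℕ}

noncomputable def colorSeries (A : Matrix (Fin m) (Fin m) ℕ) (i : Fin m) : ℚ⟦X⟧ :=
  mk fun n => (colorCount A i n : ℚ)

theorem colorSeries_eq_genFun (A : Matrix (Fin m) (Fin m) ℕ) (i : Fin m) :
    colorSeries A i = genFun {t | t.Valid A ∧ t.color = i} := by
  ext n
  simp only [colorSeries, genFun, colorCount, ofSize, coeff_mk, Set.mem_ofPred_eq, and_assoc,
    and_comm (a := _ = i)]

theorem colorSeries_eq_X_mul (A : Matrix (Fin m) (Fin m) ℕ) (i : Fin m) :
    colorSeries A i = X * forestGenFun {t : CTree (Fin m) | t.Valid A ∧ A i t.color = 1} := by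
  ext (_ | n)
  · simp [colorSeries_eq_genFun, genFun, ofSize_zero]
  · have hnode : {t : CTree (Fin m) | t.Valid A ∧ t.size = n + 1 ∧ t.color = i} =
        node i '' forestsOfSize {t | t.Valid A ∧ A i t.color = 1} n := by
      ext ⟨c, ts⟩
      simp only [Set.mem_ofPred_eq, Set.mem_image, forestsOfSize, node.injEq, size_node, color,
        valid_node_iff]
      constructor
      · rintro ⟨hv, hs, rfl⟩
        exact ⟨ts, ⟨hv, by omega⟩, rfl, rfl⟩
      · rintro ⟨ts, ⟨hv, hs⟩, rfl, rfl⟩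
        exact ⟨hv, by omega, rfl⟩
    rw [coeff_succ_X_mul, colorSeries, forestGenFun, coeff_mk, coeff_mk, colorCount, hnode,
      Set.ncard_image_of_injective _ fun _ _ h => (node.inj h).2]

theorem coeff_zero_colorSeries (A : Matrix (Fin m) (Fin m) ℕ) (i : Fin m) :
    coeff 0 (colorSeries A i) = 0 := by
  rw [colorSeries_eq_X_mul, coeff_zero_X_mul]

theorem colorSeries_eq (A : Matrix (Fin m) (Fin m) ℕ) (i : Fin m) :
    colorSeries A i =
      X + (∑ j ∈ Finset.univ.filter (A i · = 1), colorSeries A j) * colorSeries A i := by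
  have hchildren : genFun {t : CTree (Fin m) | t.Valid A ∧ A i t.color = 1} =
      ∑ j ∈ Finset.univ.filter (A i · = 1), colorSeries A j := by
    simp only [colorSeries_eq_genFun]
    rw [← genFun_biUnion]
    · congr 1; ext t; simp [and_comm]
    · intro j _ k _ hjk
      exact Set.disjoint_left.mpr fun t ht ht' => hjk (ht.2.symm.trans ht'.2)
  rw [← hchildren]
  conv_lhs => rw [colorSeries_eq_X_mul, forestGenFun_eq]
  rw [colorSeries_eq_X_mul]
  ring

end Coloring

namespace PowerSeries

variable {R : Type*} [CommSemiring R]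

theorem coeff_ofNat_mul (a : ℕ) [a.AtLeastTwo] (k : ℕ) (f : R⟦X⟧) :
    coeff k ((ofNat(a) : R⟦X⟧) * f) = ofNat(a) * coeff k f := by
  rw [← map_ofNat C a, coeff_C_mul]

theorem coeff_ofNat (a : ℕ) [a.AtLeastTwo] (k : ℕ) :
    coeff k (ofNat(a) : R⟦X⟧) = if k = 0 then ofNat(a) else 0 := by
  rw [← map_ofNat C a, coeff_C]

end PowerSeries

section Cubic

variable {R : Type*} [CommRing R] {A : R⟦X⟧}

theorem derivative_mul_eq_one (h : A * (1 - A) ^ 2 = X) :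
    d⁄dX R A * ((1 - A) * (1 - 3 * A)) = 1 := by
  have h' := congrArg (d⁄dX R) h
  simp only [Derivation.leibniz, Derivation.leibniz_pow, map_sub, derivative_one, derivative_X,
    smul_eq_mul, nsmul_eq_mul] at h'
  linear_combination h'

theorem derivative_derivative_mul (h : A * (1 - A) ^ 2 = X) :
    d⁄dX R (d⁄dX R A) * ((1 - A) * (1 - 3 * A)) = d⁄dX R A ^ 2 * (4 - 6 * A) := by
  have h' := congrArg (d⁄dX R) (derivative_mul_eq_one h)
  have h3 : d⁄dX R (3 : R⟦X⟧) = 0 := by rw [← map_ofNat C 3, derivative_C]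
  simp only [Derivation.leibniz, map_sub, derivative_one, h3, smul_eq_mul] at h'
  linear_combination h'

theorem ode_of_mul_one_sub_sq_eq_X (h : A * (1 - A) ^ 2 = X) :
    X * (4 - 27 * X) * d⁄dX R (d⁄dX R A) + (2 - 27 * X) * d⁄dX R A + 3 * A = 2 := by
  set D := d⁄dX R A
  set U := (1 - A) * (1 - 3 * A)
  have hD : D * U = 1 := derivative_mul_eq_one h
  have hE := derivative_derivative_mul h
  rw [← sub_eq_zero, ← ((IsUnit.of_mul_eq_one_right _ hD).pow 3).mul_left_eq_zero]
  linear_combination (X * (4 - 27 * X) * U ^ 2) * hE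
    + (X * (4 - 27 * X) * (4 - 6 * A) * (D * U + 1) + (2 - 27 * X) * U ^ 2) * hD
    + (11 + 108 * X - 84 * A - 162 * A * X + 216 * A ^ 2 - 216 * A ^ 3 + 81 * A ^ 4) * h

theorem derivative_sub_sq (h : A * (1 - A) ^ 2 = X) :
    3 * X * d⁄dX R (A - A ^ 2) = 2 * (A - A ^ 2) + X * d⁄dX R A := by
  have hD := derivative_mul_eq_one h
  rw [← sub_eq_zero, ← (IsUnit.of_mul_eq_one_right _ hD).mul_left_eq_zero, map_sub,
    Derivation.leibniz_pow]
  simp only [nsmul_eq_mul, smul_eq_mul, Nat.cast_ofNat]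
  linear_combination X * (2 - 6 * A) * hD - (2 - 6 * A) * h

theorem two_mul_coeff_one_add (h : A * (1 - A) ^ 2 = X) :
    2 * coeff 1 A + 3 * coeff 0 A = 2 := by
  have h' := congrArg (coeff 0) (ode_of_mul_one_sub_sq_eq_X h)
  simp only [mul_sub, sub_mul, mul_assoc, map_add, map_sub, coeff_zero_X_mul, coeff_derivative,
    coeff_ofNat_mul, coeff_ofNat, if_true] at h'
  linear_combination h'

theorem coeff_add_two_recurrence (h : A * (1 - A) ^ 2 = X) (k : ℕ) :
    2 * (k + 2) * (2 * k + 3) * coeff (k + 2) A =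
      3 * (3 * k + 2) * (3 * k + 4) * coeff (k + 1) A := by
  have h' := congrArg (coeff (k + 1)) (ode_of_mul_one_sub_sq_eq_X h)
  simp only [mul_sub, sub_mul, mul_assoc, map_add, map_sub, coeff_succ_X_mul, coeff_derivative,
    coeff_ofNat_mul, coeff_ofNat, k.succ_ne_zero, if_false] at h'
  cases k with
  | zero =>
    simp only [coeff_zero_X_mul] at h'
    push_cast at h' ⊢
    linear_combination h'
  | succ k =>
    simp only [coeff_succ_X_mul, coeff_derivative] at h'
    push_cast at h' ⊢
    linear_combination h'

theorem coeff_sub_sq (h : A * (1 - A) ^ 2 = X) (k : ℕ) :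
    (3 * k + 1) * coeff (k + 1) (A - A ^ 2) = (k + 1) * coeff (k + 1) A := by
  have h' := congrArg (coeff (k + 1)) (derivative_sub_sq h)
  simp only [mul_assoc, map_add, coeff_succ_X_mul, coeff_derivative, coeff_ofNat_mul] at h'
  linear_combination h'

end Cubic

theorem Nat.choose_three_mul_add_four_succ (k : ℕ) :
    2 * (k + 1) * (2 * k + 3) * (3 * k + 4).choose (k + 1) =
      3 * (3 * k + 2) * (3 * k + 4) * (3 * k + 1).choose k := by
  have h1 := Nat.choose_mul_succ_eq (3 * k + 1) k
  have h2 := Nat.choose_mul_succ_eq (3 * k + 2) k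
  have h3 := Nat.add_one_mul_choose_eq (3 * k + 3) k
  rw [show 3 * k + 1 + 1 - k = 2 * k + 2 by omega] at h1
  rw [show 3 * k + 2 + 1 - k = 2 * k + 3 by omega] at h2
  refine Nat.eq_of_mul_eq_mul_right k.succ_pos ?_
  zify at h1 h2 h3 ⊢
  linear_combination (-2 * (2 * k + 3) * (k + 1) : ℤ) * h3
    - (2 * (k + 1) * (3 * k + 4) : ℤ) * h2 - ((3 * k + 4) * (3 * k + 3) : ℤ) * h1

theorem succ_mul_coeff_succ {K : Type*} [Field K] [CharZero K] {A : K⟦X⟧}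
    (h : A * (1 - A) ^ 2 = X) (h0 : coeff 0 A = 0) (k : ℕ) :
    (k + 1) * coeff (k + 1) A = (3 * k + 1).choose k := by
  induction k with
  | zero =>
    simp only [Nat.cast_zero, zero_add, one_mul, mul_zero, Nat.choose_zero_right, Nat.cast_one]
    linear_combination two_mul_coeff_one_add h / 2 - 3 / 2 * h0
  | succ k ih =>
    have hchoose := congrArg (Nat.cast (R := K)) (Nat.choose_three_mul_add_four_succ k)
    push_cast at hchoose ⊢
    have hne : (2 * (k + 1) * (2 * k + 3) : K) ≠ 0 := by
      exact_mod_cast (show 2 * (k + 1) * (2 * k + 3) ≠ 0 by positivity)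
    refine mul_left_cancel₀ hne ?_
    linear_combination (k + 1) * coeff_add_two_recurrence h k
      + 3 * (3 * k + 2) * (3 * k + 4) * ih - hchoose

theorem colorSeries_noAdjacentTwos :
    colorSeries !![1, 1; 1, 0] 0 =
        X + (colorSeries !![1, 1; 1, 0] 0 + colorSeries !![1, 1; 1, 0] 1) *
          colorSeries !![1, 1; 1, 0] 0 ∧
      colorSeries !![1, 1; 1, 0] 1 =
        X + colorSeries !![1, 1; 1, 0] 0 * colorSeries !![1, 1; 1, 0] 1 :=
  ⟨(colorSeries_eq _ 0).trans (by simp [Finset.sum_filter, Fin.sum_univ_two]),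
    (colorSeries_eq _ 1).trans (by simp [Finset.sum_filter, Fin.sum_univ_two])⟩

theorem colorSeries_one_eq_sub_sq :
    colorSeries !![1, 1; 1, 0] 1 =
      colorSeries !![1, 1; 1, 0] 0 - colorSeries !![1, 1; 1, 0] 0 ^ 2 := by
  linear_combination colorSeries_noAdjacentTwos.2 - colorSeries_noAdjacentTwos.1

theorem colorSeries_zero_mul_one_sub_sq :
    colorSeries !![1, 1; 1, 0] 0 * (1 - colorSeries !![1, 1; 1, 0] 0) ^ 2 = X := by
  have h0 := colorSeries_noAdjacentTwos.1
  rw [colorSeries_one_eq_sub_sq] at h0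
  linear_combination h0

/-- For the matrix `[[1,1],[1,0]]`, trees with root color 1 are counted by
`(1/n)·C(3n-2, n-1)` and trees with root color 2 by `(1/(2n-1))·C(3n-3, n-1)`. -/
theorem stmt9 (n : ℕ) (hn : 1 ≤ n) :
    n * colorCount (!![1, 1; 1, 0] : Matrix (Fin 2) (Fin 2) ℕ) 0 n =
      (3 * n - 2).choose (n - 1) ∧
    (2 * n - 1) * colorCount (!![1, 1; 1, 0] : Matrix (Fin 2) (Fin 2) ℕ) 1 n =
      (3 * n - 3).choose (n - 1) := by
  obtain ⟨k, rfl⟩ : ∃ k, n = k + 1 := ⟨n - 1, by omega⟩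
  rw [show 3 * (k + 1) - 2 = 3 * k + 1 by omega, show 2 * (k + 1) - 1 = 2 * k + 1 by omega,
    show 3 * (k + 1) - 3 = 3 * k by omega, Nat.add_sub_cancel]
  have hA := colorSeries_zero_mul_one_sub_sq
  have h0 := succ_mul_coeff_succ hA (coeff_zero_colorSeries _ 0) k
  have h1 := coeff_sub_sq hA k
  rw [← colorSeries_one_eq_sub_sq, h0] at h1
  simp only [colorSeries, coeff_mk] at h0 h1
  have hroot0 : (k + 1) * colorCount !![1, 1; 1, 0] 0 (k + 1) = (3 * k + 1).choose k := by
    exact_mod_cast h0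
  have hroot1 : (3 * k + 1) * colorCount !![1, 1; 1, 0] 1 (k + 1) = (3 * k + 1).choose k := by
    exact_mod_cast h1
  refine ⟨hroot0, Nat.eq_of_mul_eq_mul_left (by omega : 0 < 3 * k + 1) ?_⟩
  have hchoose := Nat.choose_mul_succ_eq (3 * k) k
  rw [show 3 * k + 1 - k = 2 * k + 1 by omega] at hchoose
  rw [mul_left_comm, hroot1, mul_comm, ← hchoose, mul_comm]
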